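/- Let σ > 0 and define the Gini mean semi-difference Gini(X) = ∫_{−∞}^∞ [F_X(x) − F_X(x)²] dx. Then sup over X ∈ V_S(μ,σ) of Gini(X), sup over X ∈ V_U(μ,σ) of Gini(X), and sup over X ∈ V_SU(μ,σ) of Gini(X) are all equal to σ/√3; over V_S(μ,σ) the supremum is attained by the uniform distribution on [μ−√3σ, μ+√3σ], i.e. by X_* with quantile function F_{X_*}^{-1}(u) = μ + √3·σ·(2u−1). -/

import Mathlib

open MeasureTheory Set

noncomputable section

variable {Ω : Type*} [MeasureSpace Ω]

/-- The (right-continuous) cumulative distribution function of a random variable. -/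
def cdfRV (X : Ω → ℝ) (t : ℝ) : ℝ := ((volume : Measure Ω) {ω | X ω ≤ t}).toReal

/-- The survival function `x ↦ P(X > x)` of a random variable. -/
def sfRV (X : Ω → ℝ) (t : ℝ) : ℝ := ((volume : Measure Ω) {ω | t < X ω}).toReal

/-- The left-continuous quantile function `F_X^{-1}(p) = inf {x | F_X x ≥ p}`. -/
def quantileRV (X : Ω → ℝ) (p : ℝ) : ℝ := sInf {x : ℝ | p ≤ cdfRV X x}

/-- A random variable is unimodal if its cdf is convex on `(-∞, x₀)` and concave on
`(x₀, ∞)` for some mode `x₀`. -/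
def Unimodal (X : Ω → ℝ) : Prop :=
  ∃ x₀ : ℝ, ConvexOn ℝ (Iio x₀) (cdfRV X) ∧ ConcaveOn ℝ (Ioi x₀) (cdfRV X)

/-- `X` is symmetric about `c`: `X - c` and `c - X` are equal in distribution. -/
def SymmAbout (X : Ω → ℝ) (c : ℝ) : Prop :=
  Measure.map (fun ω => X ω - c) (volume : Measure Ω) =
    Measure.map (fun ω => c - X ω) (volume : Measure Ω)

/-- `X` is symmetric (about some point). -/
def SymmetricRV (X : Ω → ℝ) : Prop := ∃ c : ℝ, SymmAbout X c

/-- `V(μ, σ)`: random variables with mean `μ` and variance `σ²`. -/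
def Vset (μ σ : ℝ) : Set (Ω → ℝ) :=
  {X | Measurable X ∧ Integrable X (volume : Measure Ω) ∧
    (∫ ω, X ω ∂(volume : Measure Ω)) = μ ∧
    Integrable (fun ω => (X ω - μ) ^ 2) (volume : Measure Ω) ∧
    (∫ ω, (X ω - μ) ^ 2 ∂(volume : Measure Ω)) = σ ^ 2}

/-- `V_U(μ, σ)`: unimodal members of `V(μ, σ)`. -/
def VU (μ σ : ℝ) : Set (Ω → ℝ) := {X | X ∈ Vset μ σ ∧ Unimodal X}

/-- `V_S(μ, σ)`: members of `V(μ, σ)` symmetric about the mean `μ`. -/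
def VS (μ σ : ℝ) : Set (Ω → ℝ) := {X | X ∈ Vset μ σ ∧ SymmAbout X μ}

/-- `V_{SU}(μ, σ)`: symmetric and unimodal members of `V(μ, σ)`. -/
def VSU (μ σ : ℝ) : Set (Ω → ℝ) := {X | X ∈ Vset μ σ ∧ SymmAbout X μ ∧ Unimodal X}

/-- The distortion riskmetric `ρ_g`. -/
def rho (g : ℝ → ℝ) (X : Ω → ℝ) : ℝ :=
  (∫ x in Iio (0 : ℝ), (g (sfRV X x) - g 1)) + ∫ x in Ioi (0 : ℝ), g (sfRV X x)

/-- The entropy `∫ g(P(X > x)) dx`. -/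
def entropyRV (g : ℝ → ℝ) (X : Ω → ℝ) : ℝ := ∫ x : ℝ, g (sfRV X x)

/-- The weighted entropy `∫ ψ(x) g(P(X > x)) dx`. -/
def wentropyRV (ψ g : ℝ → ℝ) (X : Ω → ℝ) : ℝ := ∫ x : ℝ, ψ x * g (sfRV X x)

/-- `g ∈ 𝒢`: `g` is of bounded variation on `[0,1]` with `g 0 = 0`. -/
def memG (g : ℝ → ℝ) : Prop := BoundedVariationOn g (Icc 0 1) ∧ g 0 = 0

/-- `ĝ(u) = g(1) - g(1-u)`. -/
def hatg (g : ℝ → ℝ) : ℝ → ℝ := fun u => g 1 - g (1 - u)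

/-- The convex envelope on `[0,1]`: the largest convex function below `k` on `[0,1]`. -/
def convexEnvelope (k : ℝ → ℝ) : ℝ → ℝ := fun x =>
  sSup {y : ℝ | ∃ h : ℝ → ℝ, ConvexOn ℝ (Icc (0:ℝ) 1) h ∧
    (∀ u ∈ Icc (0:ℝ) 1, h u ≤ k u) ∧ y = h x}

/-- The concave envelope on `[0,1]`: the smallest concave function above `k` on `[0,1]`. -/
def concaveEnvelope (k : ℝ → ℝ) : ℝ → ℝ := fun x =>
  sInf {y : ℝ | ∃ h : ℝ → ℝ, ConcaveOn ℝ (Icc (0:ℝ) 1) h ∧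
    (∀ u ∈ Icc (0:ℝ) 1, k u ≤ h u) ∧ y = h x}

/-- The right derivative. -/
def rderiv (f : ℝ → ℝ) (x : ℝ) : ℝ := derivWithin f (Ici x) x

/-- Tail value-at-risk / expected shortfall at level `α`. -/
def TVaR (α : ℝ) (X : Ω → ℝ) : ℝ := (1 - α)⁻¹ * ∫ u in α..1, quantileRV X u

/-- The probability space is rich enough to support a uniformly distributed random
variable (a consequence of atomlessness used throughout). -/
def Rich (Ω : Type*) [MeasureSpace Ω] : Prop :=
  ∃ U : Ω → ℝ, Measurable U ∧
    Measure.map U (volume : Measure Ω) = volume.restrict (Ioo (0:ℝ) 1)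


/-- The Gini mean semi-difference. -/
def giniRV (X : Ω → ℝ) : ℝ := ∫ x : ℝ, (cdfRV X x - (cdfRV X x) ^ 2)

end

/-!
For a measurable integrable `X` with quantile function `Q = F_X⁻¹`, Fubini gives
`Gini(X) = ∫₀¹ (2u - 1) Q(u) du`, because `∫₀¹ (2u - 1) 𝟙[Q(u) ≤ x] du = F_X(x)² - F_X(x)` by the
Galois connection `Q(u) ≤ x ↔ u ≤ F_X(x)`. As `∫₀¹ (2u - 1) du = 0` and `∫₀¹ (2u - 1)² du = 1/3`,
Cauchy–Schwarz against `Q - μ`, whose square integrates to `σ²`, bounds the Gini by `σ/√3`.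
Equality holds for the quantile `μ + √3 σ (2u - 1)`, realised by `μ + √3 σ (2U - 1)` with `U`
uniform on `(0,1)`; this variable is symmetric and unimodal, so it lies in all three classes.
-/

open ProbabilityTheory Filter

section UnitInterval

instance : IsProbabilityMeasure (volume.restrict (Ioo (0:ℝ) 1)) := ⟨by simp⟩

lemma volume_restrict_Ioo_Iic (t : ℝ) :
    volume.restrict (Ioo (0:ℝ) 1) (Iic t) = ENNReal.ofReal (min t 1) := by
  rw [Measure.restrict_congr_set Ioo_ae_eq_Ioc, Measure.restrict_apply measurableSet_Iic,
    inter_comm, Ioc_inter_Iic, Real.volume_Ioc, sub_zero, inf_comm]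

lemma setIntegral_Ioo_indicator_Iic {f : ℝ → ℝ} {c : ℝ} (hc : c ∈ Icc (0:ℝ) 1) :
    ∫ u in Ioo (0:ℝ) 1, (Iic c).indicator f u = ∫ u in (0:ℝ)..c, f u := by
  rw [Measure.restrict_congr_set Ioo_ae_eq_Ioc, setIntegral_indicator measurableSet_Iic,
    Ioc_inter_Iic, inf_eq_right.2 hc.2, intervalIntegral.integral_of_le hc.1]

lemma Continuous.integrable_restrict_Ioo {f : ℝ → ℝ} (hf : Continuous f) (a b : ℝ) :
    Integrable f (volume.restrict (Ioo a b)) :=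
  hf.integrableOn_Icc.mono_set Ioo_subset_Icc_self

lemma integrable_two_mul_sub_one :
    Integrable (fun u : ℝ => 2 * u - 1) (volume.restrict (Ioo (0:ℝ) 1)) :=
  Continuous.integrable_restrict_Ioo (by fun_prop) 0 1

lemma ae_norm_two_mul_sub_one_le :
    ∀ᵐ u ∂(volume.restrict (Ioo (0:ℝ) 1)), ‖2 * u - 1‖ ≤ 1 := by
  filter_upwards [ae_restrict_mem measurableSet_Ioo] with u hu
  rw [Real.norm_eq_abs, abs_le]
  constructor <;> linarith [hu.1, hu.2]

lemma intervalIntegral_two_mul_sub_one (c : ℝ) : ∫ u in (0:ℝ)..c, (2 * u - 1) = c ^ 2 - c := by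
  rw [intervalIntegral.integral_comp_mul_sub (fun x => x) two_ne_zero, integral_id]
  ring

lemma setIntegral_Ioo_two_mul_sub_one : ∫ u in Ioo (0:ℝ) 1, (2 * u - 1) = 0 := by
  rw [← integral_Ioc_eq_integral_Ioo, ← intervalIntegral.integral_of_le zero_le_one,
    intervalIntegral_two_mul_sub_one]
  norm_num

lemma setIntegral_Ioo_two_mul_sub_one_sq : ∫ u in Ioo (0:ℝ) 1, (2 * u - 1) ^ 2 = 1 / 3 := by
  rw [← integral_Ioc_eq_integral_Ioo, ← intervalIntegral.integral_of_le zero_le_one,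
    intervalIntegral.integral_comp_mul_sub (fun x => x ^ 2) two_ne_zero, integral_pow]
  norm_num

lemma map_one_sub_volume_restrict_Ioo :
    (volume.restrict (Ioo (0:ℝ) 1)).map (fun u => 1 - u) = volume.restrict (Ioo (0:ℝ) 1) := by
  have hpre : (fun u : ℝ => 1 - u) ⁻¹' Ioo 0 1 = Ioo 0 1 := by
    ext u
    simp only [mem_preimage, mem_Ioo]
    constructor <;> rintro ⟨h₁, h₂⟩ <;> constructor <;> linarith
  conv_rhs => rw [← Measure.map_sub_left_eq_self volume (1:ℝ)]
  rw [Measure.restrict_map (by fun_prop) measurableSet_Ioo, hpre]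

end UnitInterval

section Quantile

variable {Ω : Type*} [MeasureSpace Ω] [IsProbabilityMeasure (volume : Measure Ω)] {X : Ω → ℝ}

lemma cdfRV_eq_cdf (hX : Measurable X) (t : ℝ) : cdfRV X t = cdf (volume.map X) t := by
  have := Measure.isProbabilityMeasure_map (μ := volume) hX.aemeasurable
  rw [cdf_eq_real, cdfRV, measureReal_def, Measure.map_apply hX measurableSet_Iic]
  rfl

lemma cdfRV_le_one (hX : Measurable X) (t : ℝ) : cdfRV X t ≤ 1 := by
  have := Measure.isProbabilityMeasure_map (μ := volume) hX.aemeasurable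
  rw [cdfRV_eq_cdf hX]
  exact cdf_le_one _ _

lemma quantileRV_le_iff (hX : Measurable X) {p : ℝ} (hp : p ∈ Ioo (0:ℝ) 1) (x : ℝ) :
    quantileRV X p ≤ x ↔ p ≤ cdfRV X x := by
  have := Measure.isProbabilityMeasure_map (μ := volume) hX.aemeasurable
  set F := cdf (volume.map X)
  have hS : {y | p ≤ cdfRV X y} = {y | p ≤ F y} := by simp only [cdfRV_eq_cdf hX, F]
  rw [quantileRV, hS, cdfRV_eq_cdf hX]
  have hne : {y | p ≤ F y}.Nonempty :=
    ((tendsto_cdf_atTop _).eventually (eventually_ge_nhds hp.2)).exists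
  have hbdd : BddBelow {y | p ≤ F y} := by
    obtain ⟨z, hz⟩ := eventually_atBot.mp
      ((tendsto_cdf_atBot (volume.map X)).eventually (eventually_lt_nhds hp.1))
    exact ⟨z, fun y hy => not_lt.mp fun hyz => (hz y hyz.le).not_ge hy⟩
  refine ⟨fun h => le_trans ?_ (F.mono h), fun h => csInf_le hbdd h⟩
  -- right continuity of `F` puts the infimum in the set
  by_contra! hlt
  obtain ⟨ε, hε, hsub⟩ := mem_nhdsGE_iff_exists_Ico_subset.mp
    ((F.right_continuous _).eventually (eventually_lt_nhds hlt))
  obtain ⟨y, hyS, hyε⟩ := exists_lt_of_csInf_lt hne hε.out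
  exact (show F y < p from hsub ⟨csInf_le hbdd hyS, hyε⟩).not_ge hyS

lemma monotoneOn_quantileRV (hX : Measurable X) : MonotoneOn (quantileRV X) (Ioo (0:ℝ) 1) :=
  fun _ hp _ hq hpq => (quantileRV_le_iff hX hp _).2 <|
    hpq.trans ((quantileRV_le_iff hX hq _).1 le_rfl)

lemma aemeasurable_quantileRV (hX : Measurable X) :
    AEMeasurable (quantileRV X) (volume.restrict (Ioo (0:ℝ) 1)) :=
  aemeasurable_restrict_of_monotoneOn measurableSet_Ioo (monotoneOn_quantileRV hX)

lemma map_quantileRV (hX : Measurable X) :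
    (volume.restrict (Ioo (0:ℝ) 1)).map (quantileRV X) = volume.map X := by
  have := Measure.isProbabilityMeasure_map (μ := volume) hX.aemeasurable
  refine Measure.ext_of_Iic _ _ fun x => ?_
  have hpre : quantileRV X ⁻¹' Iic x ∩ Ioo 0 1 = Iic (cdfRV X x) ∩ Ioo 0 1 := by
    ext u
    simp only [mem_inter_iff, mem_preimage, mem_Iic, and_congr_left_iff]
    exact fun hu => quantileRV_le_iff hX hu x
  rw [Measure.map_apply_of_aemeasurable (aemeasurable_quantileRV hX) measurableSet_Iic,
    Measure.restrict_apply' measurableSet_Ioo, hpre, ← Measure.restrict_apply' measurableSet_Ioo,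
    volume_restrict_Ioo_Iic, min_eq_left (cdfRV_le_one hX x), cdfRV_eq_cdf hX, ofReal_cdf]

lemma integral_comp_quantileRV (hX : Measurable X) {g : ℝ → ℝ}
    (hg : AEStronglyMeasurable g (volume.map X)) :
    ∫ u in Ioo (0:ℝ) 1, g (quantileRV X u) = ∫ ω, g (X ω) := by
  rw [← integral_map (aemeasurable_quantileRV hX) (by rwa [map_quantileRV hX]),
    map_quantileRV hX, integral_map hX.aemeasurable hg]

lemma integrable_comp_quantileRV_iff (hX : Measurable X) {g : ℝ → ℝ}
    (hg : AEStronglyMeasurable g (volume.map X)) :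
    Integrable (fun u => g (quantileRV X u)) (volume.restrict (Ioo (0:ℝ) 1)) ↔
      Integrable (fun ω => g (X ω)) := by
  change Integrable (g ∘ quantileRV X) _ ↔ Integrable (g ∘ X) _
  rw [← integrable_map_measure (by rwa [map_quantileRV hX]) (aemeasurable_quantileRV hX),
    map_quantileRV hX, integrable_map_measure hg hX.aemeasurable]

end Quantile

section GiniQuantile

/-- Subtracting the step at `0` makes `x ↦ 𝟙[q ≤ x]` integrable. -/
noncomputable def heavisideSub (q x : ℝ) : ℝ := (if q ≤ x then 1 else 0) - if 0 ≤ x then 1 else 0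

lemma measurable_heavisideSub : Measurable fun p : ℝ × ℝ => heavisideSub p.1 p.2 :=
  (Measurable.ite (measurableSet_le measurable_fst measurable_snd) measurable_const
    measurable_const).sub
    (Measurable.ite (measurableSet_le measurable_const measurable_snd) measurable_const
      measurable_const)

lemma heavisideSub_eq (q : ℝ) :
    heavisideSub q = (Ico q 0).indicator 1 - (Ico 0 q).indicator 1 := by
  ext x
  simp only [heavisideSub, Pi.sub_apply, indicator_apply, mem_Ico, Pi.one_apply]
  split_ifs <;> simp_all <;> linarith

lemma integrable_indicator_one_Ico (a b : ℝ) : Integrable ((Ico a b).indicator (1 : ℝ → ℝ)) :=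
  (integrable_indicator_iff measurableSet_Ico).2 (integrableOn_const (by simp))

lemma integrable_heavisideSub (q : ℝ) : Integrable (heavisideSub q) := by
  rw [heavisideSub_eq]
  exact (integrable_indicator_one_Ico q 0).sub (integrable_indicator_one_Ico 0 q)

lemma integral_heavisideSub (q : ℝ) : ∫ x, heavisideSub q x = -q := by
  rw [heavisideSub_eq, Pi.sub_def, integral_sub (integrable_indicator_one_Ico q 0)
    (integrable_indicator_one_Ico 0 q), integral_indicator_one measurableSet_Ico,
    integral_indicator_one measurableSet_Ico]
  rcases le_total q 0 with hq | hq <;> simp [measureReal_def, hq]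

lemma integral_norm_heavisideSub (q : ℝ) : ∫ x, ‖heavisideSub q x‖ = |q| := by
  rw [heavisideSub_eq]
  rcases le_total q 0 with hq | hq <;>
    simp [norm_indicator_eq_indicator_norm, measureReal_def, hq, abs_of_nonpos, abs_of_nonneg]

lemma integral_integral_mul_heavisideSub {α : Type*} [MeasurableSpace α] {m : Measure α}
    [SFinite m] {w g : α → ℝ} {C : ℝ} (hw : AEStronglyMeasurable w m)
    (hwC : ∀ᵐ a ∂m, ‖w a‖ ≤ C) (hg : Integrable g m) :
    ∫ x, ∫ a, w a * heavisideSub (g a) x ∂m = -∫ a, w a * g a ∂m := by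
  have hmeas : AEStronglyMeasurable (fun p : ℝ × α => w p.2 * heavisideSub (g p.2) p.1)
      (volume.prod m) :=
    hw.comp_snd.mul <| (measurable_heavisideSub.comp_aemeasurable
      ((hg.aemeasurable.comp_quasiMeasurePreserving Measure.quasiMeasurePreserving_snd).prodMk
        measurable_fst.aemeasurable)).aestronglyMeasurable
  have hint : Integrable (fun p : ℝ × α => w p.2 * heavisideSub (g p.2) p.1) (volume.prod m) := by
    refine (integrable_prod_iff' hmeas).2
      ⟨ae_of_all _ fun a => (integrable_heavisideSub (g a)).const_mul (w a), ?_⟩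
    simp only [norm_mul, integral_const_mul, integral_norm_heavisideSub]
    exact (hg.bdd_mul hw hwC).norm.congr (ae_of_all _ fun a => by simp [Real.norm_eq_abs])
  rw [integral_integral_swap hint, ← integral_neg]
  simp only [integral_const_mul, integral_heavisideSub, mul_neg]

variable {Ω : Type*} [MeasureSpace Ω] [IsProbabilityMeasure (volume : Measure Ω)] {X : Ω → ℝ}

lemma setIntegral_mul_heavisideSub_quantileRV (hX : Measurable X) (x : ℝ) :
    ∫ u in Ioo (0:ℝ) 1, (2 * u - 1) * heavisideSub (quantileRV X u) x =
      cdfRV X x ^ 2 - cdfRV X x := by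
  have hF : cdfRV X x ∈ Icc (0:ℝ) 1 := ⟨ENNReal.toReal_nonneg, cdfRV_le_one hX x⟩
  calc ∫ u in Ioo (0:ℝ) 1, (2 * u - 1) * heavisideSub (quantileRV X u) x
      = ∫ u in Ioo (0:ℝ) 1, ((Iic (cdfRV X x)).indicator (fun u => 2 * u - 1) u -
          (2 * u - 1) * if 0 ≤ x then 1 else 0) := by
        refine setIntegral_congr_fun measurableSet_Ioo fun u hu => ?_
        simp only [heavisideSub, quantileRV_le_iff hX hu, indicator_apply, mem_Iic]
        split_ifs <;> ring
    _ = cdfRV X x ^ 2 - cdfRV X x := by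
        rw [integral_sub (integrable_two_mul_sub_one.indicator measurableSet_Iic)
          (integrable_two_mul_sub_one.mul_const _), integral_mul_const,
          setIntegral_Ioo_indicator_Iic hF, intervalIntegral_two_mul_sub_one,
          setIntegral_Ioo_two_mul_sub_one, zero_mul, sub_zero]

lemma giniRV_eq_setIntegral_quantileRV (hX : Measurable X) (hXi : Integrable X) :
    giniRV X = ∫ u in Ioo (0:ℝ) 1, (2 * u - 1) * quantileRV X u := by
  have hQ : Integrable (quantileRV X) (volume.restrict (Ioo (0:ℝ) 1)) :=
    (integrable_comp_quantileRV_iff hX (g := id) aestronglyMeasurable_id).2 hXi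
  calc giniRV X = -∫ x, ∫ u in Ioo (0:ℝ) 1, (2 * u - 1) * heavisideSub (quantileRV X u) x := by
        simp only [giniRV, setIntegral_mul_heavisideSub_quantileRV hX, ← integral_neg, neg_sub]
    _ = _ := by
        rw [integral_integral_mul_heavisideSub (by fun_prop) ae_norm_two_mul_sub_one_le hQ, neg_neg]

end GiniQuantile

section Bound

lemma integral_mul_le_sqrt_mul_sqrt {α : Type*} [MeasurableSpace α] {m : Measure α}
    {f g : α → ℝ} (hf : MemLp f 2 m) (hg : MemLp g 2 m) :
    ∫ a, f a * g a ∂m ≤ √(∫ a, f a ^ 2 ∂m) * √(∫ a, g a ^ 2 ∂m) := by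
  have h2 : ENNReal.ofReal 2 = 2 := by norm_num
  calc ∫ a, f a * g a ∂m ≤ ∫ a, ‖f a‖ * ‖g a‖ ∂m := by
        refine integral_mono (hf.integrable_mul hg) (hf.norm.integrable_mul hg.norm) fun a => ?_
        rw [← norm_mul, Real.norm_eq_abs]
        exact le_abs_self _
    _ ≤ (∫ a, ‖f a‖ ^ (2:ℝ) ∂m) ^ (1 / 2 : ℝ) * (∫ a, ‖g a‖ ^ (2:ℝ) ∂m) ^ (1 / 2 : ℝ) :=
        integral_mul_norm_le_Lp_mul_Lq Real.HolderConjugate.two_two (h2 ▸ hf) (h2 ▸ hg)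
    _ = √(∫ a, f a ^ 2 ∂m) * √(∫ a, g a ^ 2 ∂m) := by
        simp only [Real.sqrt_eq_rpow, Real.rpow_two, Real.norm_eq_abs, sq_abs]

variable {Ω : Type*} [MeasureSpace Ω] [IsProbabilityMeasure (volume : Measure Ω)] {X : Ω → ℝ}

lemma giniRV_le_of_mem_Vset {μ σ : ℝ} (hX : X ∈ Vset μ σ) (hσ : 0 ≤ σ) :
    giniRV X ≤ σ / √3 := by
  obtain ⟨hXm, hXi, -, hvar_int, hvar⟩ := hX
  set Q := quantileRV X
  have hsq : Continuous fun x : ℝ => (x - μ) ^ 2 := by fun_prop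
  have hQ : Integrable Q (volume.restrict (Ioo (0:ℝ) 1)) :=
    (integrable_comp_quantileRV_iff hXm (g := id) aestronglyMeasurable_id).2 hXi
  have hQμ : MemLp (fun u => Q u - μ) 2 (volume.restrict (Ioo (0:ℝ) 1)) :=
    (memLp_two_iff_integrable_sq (hQ.sub (integrable_const μ)).1).2
      ((integrable_comp_quantileRV_iff hXm hsq.aestronglyMeasurable).2 hvar_int)
  have hw : MemLp (fun u : ℝ => 2 * u - 1) 2 (volume.restrict (Ioo (0:ℝ) 1)) :=
    (memLp_two_iff_integrable_sq (by fun_prop)).2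
      (Continuous.integrable_restrict_Ioo (by fun_prop) 0 1)
  calc giniRV X = ∫ u in Ioo (0:ℝ) 1, (2 * u - 1) * (Q u - μ) := by
        rw [giniRV_eq_setIntegral_quantileRV hXm hXi]
        simp only [mul_sub]
        rw [integral_sub (hQ.bdd_mul (by fun_prop) ae_norm_two_mul_sub_one_le)
            (integrable_two_mul_sub_one.mul_const μ),
          integral_mul_const, setIntegral_Ioo_two_mul_sub_one, zero_mul, sub_zero]
    _ ≤ √(∫ u in Ioo (0:ℝ) 1, (2 * u - 1) ^ 2) * √(∫ u in Ioo (0:ℝ) 1, (Q u - μ) ^ 2) :=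
        integral_mul_le_sqrt_mul_sqrt hw hQμ
    _ = σ / √3 := by
        rw [setIntegral_Ioo_two_mul_sub_one_sq,
          integral_comp_quantileRV hXm hsq.aestronglyMeasurable, hvar, Real.sqrt_sq hσ,
          Real.sqrt_div' _ zero_le_three]
        ring

lemma sSup_image_giniRV_eq {μ σ : ℝ} (hσ : 0 ≤ σ) {S : Set (Ω → ℝ)} (hS : S ⊆ Vset μ σ)
    (hX : X ∈ S) (hgini : giniRV X = σ / √3) :
    sSup (giniRV '' S) = σ / √3 :=
  IsGreatest.csSup_eq ⟨⟨X, hX, hgini⟩, by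
    rintro _ ⟨Y, hY, rfl⟩
    exact giniRV_le_of_mem_Vset (hS hY) hσ⟩

end Bound

section Uniform

variable {Ω : Type*} [MeasureSpace Ω] {U : Ω → ℝ}

/-- Uniform on `[c - s, c + s]` when `U` is uniform on `(0,1)`. -/
def centeredUniform (U : Ω → ℝ) (c s : ℝ) : Ω → ℝ := fun ω => c + s * (2 * U ω - 1)

lemma measurable_centeredUniform (hU : Measurable U) (c s : ℝ) :
    Measurable (centeredUniform U c s) := by
  unfold centeredUniform
  fun_prop

lemma integral_comp_of_map_eq (hU : Measurable U)
    (hUnif : volume.map U = volume.restrict (Ioo (0:ℝ) 1)) {g : ℝ → ℝ} (hg : Continuous g) :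
    ∫ ω, g (U ω) = ∫ u in Ioo (0:ℝ) 1, g u := by
  rw [← integral_map hU.aemeasurable hg.aestronglyMeasurable, hUnif]

lemma integrable_comp_of_map_eq (hU : Measurable U)
    (hUnif : volume.map U = volume.restrict (Ioo (0:ℝ) 1)) {g : ℝ → ℝ} (hg : Continuous g) :
    Integrable fun ω => g (U ω) :=
  (integrable_map_measure hg.aestronglyMeasurable hU.aemeasurable).1
    (hUnif ▸ hg.integrable_restrict_Ioo 0 1)

lemma cdfRV_centeredUniform (hU : Measurable U)
    (hUnif : volume.map U = volume.restrict (Ioo (0:ℝ) 1)) {c s : ℝ} (hs : 0 < s) (x : ℝ) :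
    cdfRV (centeredUniform U c s) x = max (min ((x - c + s) / (2 * s)) 1) 0 := by
  have hpre : {ω | centeredUniform U c s ω ≤ x} = U ⁻¹' Iic ((x - c + s) / (2 * s)) := by
    ext ω
    simp only [centeredUniform, mem_ofPred_eq, mem_preimage, mem_Iic,
      le_div_iff₀ (show (0:ℝ) < 2 * s by positivity)]
    constructor <;> intro h <;> linarith
  rw [cdfRV, hpre, ← Measure.map_apply hU measurableSet_Iic, hUnif, volume_restrict_Ioo_Iic,
    ENNReal.toReal_ofReal']

lemma quantileRV_centeredUniform [IsProbabilityMeasure (volume : Measure Ω)] (hU : Measurable U)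
    (hUnif : volume.map U = volume.restrict (Ioo (0:ℝ) 1)) {c s : ℝ} (hs : 0 < s)
    {u : ℝ} (hu : u ∈ Ioo (0:ℝ) 1) :
    quantileRV (centeredUniform U c s) u = c + s * (2 * u - 1) := by
  refine eq_of_forall_ge_iff fun x => ?_
  rw [quantileRV_le_iff (measurable_centeredUniform hU c s) hu, cdfRV_centeredUniform hU hUnif hs,
    le_max_iff, le_min_iff, le_div_iff₀ (by positivity)]
  constructor
  · rintro (⟨h, -⟩ | h)
    · linarith
    · linarith [hu.1]
  · intro h
    exact Or.inl ⟨by linarith, hu.2.le⟩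


lemma unimodal_centeredUniform (hU : Measurable U)
    (hUnif : volume.map U = volume.restrict (Ioo (0:ℝ) 1)) {c s : ℝ} (hs : 0 < s) :
    Unimodal (centeredUniform U c s) := by
  have hslope : ∀ x, (x - c + s) / (2 * s) = (2 * s)⁻¹ * x + (s - c) / (2 * s) := fun x => by
    field_simp; ring
  have hconcave : ConcaveOn ℝ (Ioi (c - s)) fun x => (2 * s)⁻¹ * x + (s - c) / (2 * s) :=
    ((concaveOn_id (convex_Ioi _)).smul (by positivity)).add_const _
  refine ⟨c - s, (convexOn_const 0 (convex_Iio _)).congr fun x hx => ?_,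
    (hconcave.inf (concaveOn_const 1 (convex_Ioi _))).congr fun x hx => ?_⟩
  all_goals rw [cdfRV_centeredUniform hU hUnif hs, hslope]
  · have : (2 * s)⁻¹ * x + (s - c) / (2 * s) ≤ 0 := by
      rw [← hslope]
      exact div_nonpos_of_nonpos_of_nonneg (by linarith [mem_Iio.1 hx]) (by positivity)
    rw [max_eq_right (min_le_of_left_le this)]
  · have : 0 ≤ (2 * s)⁻¹ * x + (s - c) / (2 * s) := by
      rw [← hslope]
      exact div_nonneg (by linarith [mem_Ioi.1 hx]) (by positivity)
    rw [max_eq_left (le_min this zero_le_one)]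
    rfl

lemma symmAbout_centeredUniform (hU : Measurable U)
    (hUnif : volume.map U = volume.restrict (Ioo (0:ℝ) 1)) (c s : ℝ) :
    SymmAbout (centeredUniform U c s) c := by
  have hf : Measurable fun v : ℝ => s * (2 * v - 1) := by fun_prop
  have h₁ : (fun ω => centeredUniform U c s ω - c) = (fun v => s * (2 * v - 1)) ∘ U := by
    ext ω; simp [centeredUniform]
  have h₂ : (fun ω => c - centeredUniform U c s ω) =
      ((fun v => s * (2 * v - 1)) ∘ fun v => 1 - v) ∘ U := by
    ext ω; simp only [centeredUniform, Function.comp_apply]; ring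
  rw [SymmAbout, h₁, h₂, ← Measure.map_map hf hU, ← Measure.map_map (hf.comp (by fun_prop)) hU,
    hUnif, ← Measure.map_map hf (by fun_prop), map_one_sub_volume_restrict_Ioo]

lemma centeredUniform_mem_Vset [IsProbabilityMeasure (volume : Measure Ω)] (hU : Measurable U)
    (hUnif : volume.map U = volume.restrict (Ioo (0:ℝ) 1)) (μ σ : ℝ) :
    centeredUniform U μ (√3 * σ) ∈ Vset μ σ := by
  have hX : Continuous fun u : ℝ => μ + √3 * σ * (2 * u - 1) := by fun_prop
  have hX2 : Continuous fun u : ℝ => (μ + √3 * σ * (2 * u - 1) - μ) ^ 2 := by fun_prop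
  refine ⟨measurable_centeredUniform hU _ _, integrable_comp_of_map_eq hU hUnif hX, ?_,
    integrable_comp_of_map_eq hU hUnif hX2, ?_⟩
  · simp only [centeredUniform]
    rw [integral_comp_of_map_eq hU hUnif hX, integral_add (integrable_const μ)
      (integrable_two_mul_sub_one.const_mul _), integral_const_mul, setIntegral_Ioo_two_mul_sub_one]
    simp
  · simp only [centeredUniform, add_sub_cancel_left, mul_pow]
    rw [integral_const_mul,
      integral_comp_of_map_eq hU hUnif (g := fun u => (2 * u - 1) ^ 2) (by fun_prop),
      setIntegral_Ioo_two_mul_sub_one_sq, Real.sq_sqrt zero_le_three]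
    ring

lemma giniRV_centeredUniform [IsProbabilityMeasure (volume : Measure Ω)] (hU : Measurable U)
    (hUnif : volume.map U = volume.restrict (Ioo (0:ℝ) 1)) {c s : ℝ} (hs : 0 < s) :
    giniRV (centeredUniform U c s) = s / 3 := by
  rw [giniRV_eq_setIntegral_quantileRV (measurable_centeredUniform hU c s)
      (integrable_comp_of_map_eq hU hUnif (g := fun u => c + s * (2 * u - 1)) (by fun_prop)),
    setIntegral_congr_fun measurableSet_Ioo fun u hu => by
      rw [quantileRV_centeredUniform hU hUnif hs hu]]
  simp only [mul_add, ← mul_assoc, mul_comm _ s, mul_assoc s, ← sq]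
  rw [integral_add (integrable_two_mul_sub_one.mul_const c)
      ((Continuous.integrable_restrict_Ioo (by fun_prop) 0 1).const_mul s), integral_mul_const,
    integral_const_mul,
    setIntegral_Ioo_two_mul_sub_one, setIntegral_Ioo_two_mul_sub_one_sq]
  ring

end Uniform

/-- Worst-case Gini mean semi-difference: it equals `σ/√3` over symmetric, unimodal and
symmetric-unimodal distributions with given mean and variance, attained over `V_S` by
the uniform distribution on `[μ - √3 σ, μ + √3 σ]`. -/
theorem stmt_17 {Ω : Type*} [MeasureSpace Ω] [IsProbabilityMeasure (volume : Measure Ω)]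
    (hrich : Rich Ω) (μ σ : ℝ) (hσ : 0 < σ) :
    sSup (giniRV '' (VS μ σ : Set (Ω → ℝ))) = σ / Real.sqrt 3 ∧
    sSup (giniRV '' (VU μ σ : Set (Ω → ℝ))) = σ / Real.sqrt 3 ∧
    sSup (giniRV '' (VSU μ σ : Set (Ω → ℝ))) = σ / Real.sqrt 3 ∧
    ∃ X ∈ (VS μ σ : Set (Ω → ℝ)),
      (∀ u ∈ Ioo (0:ℝ) 1, quantileRV X u = μ + Real.sqrt 3 * σ * (2*u - 1)) ∧
      giniRV X = σ / Real.sqrt 3 := by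
  obtain ⟨U, hU, hUnif⟩ := hrich
  have hs : 0 < √3 * σ := by positivity
  have hV := centeredUniform_mem_Vset hU hUnif μ σ
  have hsymm := symmAbout_centeredUniform hU hUnif μ (√3 * σ)
  have hunimodal := unimodal_centeredUniform (c := μ) hU hUnif hs
  have hgini : giniRV (centeredUniform U μ (√3 * σ)) = σ / √3 := by
    rw [giniRV_centeredUniform hU hUnif hs, eq_div_iff (by positivity)]
    linear_combination σ / 3 * Real.mul_self_sqrt zero_le_three
  exact ⟨sSup_image_giniRV_eq hσ.le (fun _ h => h.1) ⟨hV, hsymm⟩ hgini,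
    sSup_image_giniRV_eq hσ.le (fun _ h => h.1) ⟨hV, hunimodal⟩ hgini,
    sSup_image_giniRV_eq hσ.le (fun _ h => h.1) ⟨hV, hsymm, hunimodal⟩ hgini,
    _, ⟨hV, hsymm⟩, fun u hu => quantileRV_centeredUniform hU hUnif hs hu, hgini⟩
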